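/- arXiv:2104.15055 — 2 statements merged into one kernel-verified Lean document; each statement's English description precedes it below -/
import Mathlib

section
/- Let L1 and L2 be two sequences of q uniformly random, pairwise-distinct elements of {0,1}^n (sampled uniformly from all injective sequences), sampled independently. Let Y be the maximum, over all a ∈ {0,1}^n, of the number of pairs (h1, h2) ∈ L1 × L2 with h1 ⊕ h2 = a. Then Pr[Y > k] <= q^{2k} · 2^n · (2^n - k)! / (k! · (2^n)!). -/
/-!
If `Y > k`, some `a` is hit by more than `k` pairs `(i, j)`. Since `L1` and `L2` are injective
these pairs form a partial matching, so ordering `k` of them gives at least `k!` triples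
`(a, i, j)` with `i, j : Fin k ↪ Fin q` and `L1 (i s) ⊕ L2 (j s) = a` for all `s`. Conversely,
once `L1` is chosen a triple fixes `L2` on `k` points, so each triple is satisfied by at most
`(2^n)_q (2^n - k)_(q-k)` pairs `(L1, L2)` (falling factorials). Double counting over the
`2^n (q)_k² ≤ 2^n q^(2k)` triples and `(2^n)_q = (2^n)_k (2^n - k)_(q-k)` give the bound.
-/

instance (n : ℕ) : Fintype (BitVec n) :=
  Fintype.ofEquiv (Fin (2 ^ n))
    ⟨BitVec.ofFin, BitVec.toFin, fun _ => rfl, fun _ => rfl⟩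

open Function Finset
open scoped Nat

theorem BitVec.card (n : ℕ) : Fintype.card (BitVec n) = 2 ^ n :=
  (Fintype.card_congr ⟨BitVec.toFin, BitVec.ofFin, fun _ => rfl, fun _ => rfl⟩).trans
    (Fintype.card_fin _)

theorem BitVec.xor_eq_iff_eq_xor {w : ℕ} {x y a : BitVec w} : x ^^^ y = a ↔ y = x ^^^ a := by
  constructor <;> rintro rfl <;> simp

theorem BitVec.biUnique_xor_eq {ι : Type*} {n : ℕ} {f g : ι → BitVec n} (hf : Injective f)
    (hg : Injective g) (a : BitVec n) : Relator.BiUnique fun i j => f i ^^^ g j = a :=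
  ⟨fun _ _ j h h' => hf ((BitVec.xor_left_inj (g j)).1 (h.trans h'.symm)),
    fun i _ _ h h' => hg ((BitVec.xor_right_inj (f i)).1 (h.trans h'.symm))⟩

/-- Listing `card κ` distinct pairs of a partial matching `r` gives a pair of injections
`κ ↪ ι`, `κ ↪ ι'`, and distinct listings give distinct pairs of injections. -/
theorem descFactorial_card_le_card_embedding_pairs {ι ι' κ : Type*} [Fintype ι] [Fintype ι']
    [Fintype κ] {r : ι → ι' → Prop} [DecidableRel r] (hr : Relator.BiUnique r) :
    (#{x : ι × ι' | r x.1 x.2}).descFactorial (Fintype.card κ)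
      ≤ #{t : (κ ↪ ι) × (κ ↪ ι') | ∀ s, r (t.1 s) (t.2 s)} := by
  let M := {x : ι × ι' // r x.1 x.2}
  let split (e : κ ↪ M) : {t : (κ ↪ ι) × (κ ↪ ι') // ∀ s, r (t.1 s) (t.2 s)} :=
    ⟨(⟨fun s => (e s).1.1, fun s s' (h : (e s).1.1 = (e s').1.1) => e.injective
        (Subtype.ext (Prod.ext h (hr.2 (e s).2 (h ▸ (e s').2))))⟩,
      ⟨fun s => (e s).1.2, fun s s' (h : (e s).1.2 = (e s').1.2) => e.injective
        (Subtype.ext (Prod.ext (hr.1 (e s).2 (h ▸ (e s').2)) h))⟩), fun s => (e s).2⟩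
  have split_injective : Injective split := fun e e' h =>
    DFunLike.ext _ _ fun s => Subtype.ext (Prod.ext
      (DFunLike.congr_fun (congrArg (·.1.1) h) s) (DFunLike.congr_fun (congrArg (·.1.2) h) s))
  rw [← Fintype.card_subtype, ← Fintype.card_subtype, ← Fintype.card_embedding_eq]
  exact Fintype.card_le_of_injective split split_injective

section Injections

variable {ι κ α : Type*} [Fintype ι] [Fintype κ] [Fintype α] [DecidableEq ι] [DecidableEq α]

theorem Fintype.card_subtype_injective :
    Fintype.card {f : ι → α // Injective f} = (card α).descFactorial (card ι) := by
  rw [Fintype.card_congr (Equiv.subtypeInjectiveEquivEmbedding ι α), Fintype.card_embedding_eq]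

/-- An injection prescribed on `card κ` points is an injection of the remaining points into
the remaining values. -/
theorem Fintype.card_subtype_injective_extending_le (e : κ ↪ ι) (v : κ ↪ α) :
    Fintype.card {g : {g : ι → α // Injective g} // ∀ s, g.1 (e s) = v s}
      ≤ (card α - card κ).descFactorial (card ι - card κ) := by
  let restrict (g : {g : {g : ι → α // Injective g} // ∀ s, g.1 (e s) = v s}) :
      ↥(Set.range e)ᶜ ↪ ↥(Set.range v)ᶜ :=
    ⟨fun x => ⟨g.1.1 x, by
        rintro ⟨s, hs⟩
        rw [← g.2 s] at hs
        exact x.2 ⟨s, g.1.2 hs⟩⟩,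
      fun x y hxy => Subtype.ext (g.1.2 (congrArg Subtype.val hxy))⟩
  have restrict_injective : Injective restrict := by
    intro g g' h
    refine Subtype.ext (Subtype.ext (funext fun x => ?_))
    by_cases hx : x ∈ Set.range e
    · obtain ⟨s, rfl⟩ := hx
      rw [g.2 s, g'.2 s]
    · exact congrArg Subtype.val (DFunLike.congr_fun h ⟨x, hx⟩)
  refine (Fintype.card_le_of_injective restrict restrict_injective).trans_eq ?_
  simp only [Fintype.card_embedding_eq, Fintype.card_compl_set, Fintype.card_range]

end Injections

section XorPairs

variable {n : ℕ} {ι κ : Type*} [Fintype ι] [Fintype κ]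

/-- `Y` of the paper, for the sequences `f` and `g`. -/
def maxXorPairs (f g : ι → BitVec n) : ℕ :=
  univ.sup fun a => #{ij : ι × ι | f ij.1 ^^^ g ij.2 = a}

/-- Once `f` is fixed, the constraints pin `g` down on `card κ` points. -/
theorem card_pairs_xor_eq_on_le [DecidableEq ι] (a : BitVec n) (i j : κ ↪ ι) :
    Fintype.card {p : {f : ι → BitVec n // Injective f} ×
        {f : ι → BitVec n // Injective f} // ∀ s, p.1.1 (i s) ^^^ p.2.1 (j s) = a}
      ≤ (2 ^ n).descFactorial (Fintype.card ι) *
          (2 ^ n - Fintype.card κ).descFactorial (Fintype.card ι - Fintype.card κ) := by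
  rw [Fintype.card_congr (Equiv.subtypeProdEquivSigmaSubtype
    fun (f g : {f : ι → BitVec n // Injective f}) => ∀ s, f.1 (i s) ^^^ g.1 (j s) = a),
    Fintype.card_sigma, ← BitVec.card n,
    ← Fintype.card_subtype_injective, ← smul_eq_mul, ← Finset.card_univ]
  refine sum_le_card_nsmul _ _ _ fun f _ => ?_
  let v : κ ↪ BitVec n := ⟨fun s => f.1 (i s) ^^^ a,
    fun s s' h => i.injective (f.2 ((BitVec.xor_left_inj a).1 h))⟩
  calc Fintype.card {g : {g : ι → BitVec n // Injective g} // ∀ s, f.1 (i s) ^^^ g.1 (j s) = a}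
      = Fintype.card {g : {g : ι → BitVec n // Injective g} // ∀ s, g.1 (j s) = v s} :=
        Fintype.card_congr (Equiv.subtypeEquivRight fun g => by
          simp only [BitVec.xor_eq_iff_eq_xor]; rfl)
    _ ≤ _ := Fintype.card_subtype_injective_extending_le j v

theorem factorial_le_card_xorPairs_embeddings {f g : ι → BitVec n} (hf : Injective f)
    (hg : Injective g) {k : ℕ} (hk : k < maxXorPairs f g) :
    k ! ≤ #{t : BitVec n × (Fin k ↪ ι) × (Fin k ↪ ι) |
      ∀ s, f (t.2.1 s) ^^^ g (t.2.2 s) = t.1} := by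
  obtain ⟨a, -, ha⟩ := Finset.lt_sup_iff.1 hk
  calc k ! ≤ (#{ij : ι × ι | f ij.1 ^^^ g ij.2 = a}).descFactorial k :=
        Nat.le_of_dvd (Nat.descFactorial_pos.2 ha.le) (Nat.factorial_dvd_descFactorial _ _)
    _ ≤ #{t : (Fin k ↪ ι) × (Fin k ↪ ι) | ∀ s, f (t.1 s) ^^^ g (t.2 s) = a} := by
        convert descFactorial_card_le_card_embedding_pairs (κ := Fin k)
          (BitVec.biUnique_xor_eq hf hg a) using 2
        · exact (Fintype.card_fin k).symm
        · congr!
    _ ≤ _ := card_le_card_of_injOn (fun t => (a, t)) (fun t ht => by simpa using ht)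
        fun _ _ _ _ h => congrArg Prod.snd h

theorem card_lt_maxXorPairs_mul_factorial_le [DecidableEq ι] (k : ℕ) :
    #{p : {f : ι → BitVec n // Injective f} × {f : ι → BitVec n // Injective f} |
        k < maxXorPairs p.1.1 p.2.1} * k ! ≤
      2 ^ n * (Fintype.card ι).descFactorial k ^ 2 *
        ((2 ^ n).descFactorial (Fintype.card ι) *
          (2 ^ n - k).descFactorial (Fintype.card ι - k)) := by
  have card_triples : #(univ : Finset (BitVec n × (Fin k ↪ ι) × (Fin k ↪ ι))) =
      2 ^ n * (Fintype.card ι).descFactorial k ^ 2 := by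
    simp only [Finset.card_univ, Fintype.card_prod, BitVec.card, Fintype.card_embedding_eq,
      Fintype.card_fin, sq]
  rw [← card_triples]
  refine card_mul_le_card_mul
    (fun p (t : BitVec n × (Fin k ↪ ι) × (Fin k ↪ ι)) =>
      ∀ s, p.1.1 (t.2.1 s) ^^^ p.2.1 (t.2.2 s) = t.1) (fun p hp => ?_) (fun t _ => ?_)
  · rw [mem_filter] at hp
    simpa [bipartiteAbove] using factorial_le_card_xorPairs_embeddings p.1.2 p.2.2 hp.2
  · have := card_pairs_xor_eq_on_le t.1 t.2.1 t.2.2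
    rw [Fintype.card_subtype, Fintype.card_fin] at this
    exact (card_le_card (filter_subset_filter _ (subset_univ _))).trans this

theorem card_lt_maxXorPairs_mul_le [DecidableEq ι] {k : ℕ} (hk : k ≤ 2 ^ n) :
    #{p : {f : ι → BitVec n // Injective f} × {f : ι → BitVec n // Injective f} |
        k < maxXorPairs p.1.1 p.2.1} * (k ! * (2 ^ n)!) ≤
      Fintype.card ι ^ (2 * k) * 2 ^ n * (2 ^ n - k)! *
        ((2 ^ n).descFactorial (Fintype.card ι) * (2 ^ n).descFactorial (Fintype.card ι)) := by
  set q := Fintype.card ι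
  set N := 2 ^ n
  have hcount := card_lt_maxXorPairs_mul_factorial_le (ι := ι) (n := n) k
  rcases le_or_gt k q with hkq | hqk
  · have hfac : N ! * (N - k).descFactorial (q - k) = (N - k)! * N.descFactorial q := by
      rw [← Nat.descFactorial_mul_descFactorial hkq, ← Nat.factorial_mul_descFactorial hk]
      ring
    have hpow : q.descFactorial k ^ 2 ≤ q ^ (2 * k) := by
      rw [mul_comm, pow_mul]
      exact Nat.pow_le_pow_left (Nat.descFactorial_le_pow q k) 2
    set E := (N - k).descFactorial (q - k)
    calc _ = _ * k ! * N ! := by ring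
      _ ≤ N * q.descFactorial k ^ 2 * (N.descFactorial q * E) * N ! :=
          Nat.mul_le_mul_right _ hcount
      _ = q.descFactorial k ^ 2 * (N * N.descFactorial q * (N ! * E)) := by ring
      _ ≤ q ^ (2 * k) * (N * N.descFactorial q * (N ! * E)) := Nat.mul_le_mul_right _ hpow
      _ = _ := by rw [hfac]; ring
  · rw [Nat.descFactorial_eq_zero_iff_lt.2 hqk] at hcount
    rw [zero_pow two_ne_zero, mul_zero, zero_mul, Nat.le_zero] at hcount
    rw [← mul_assoc, hcount, zero_mul]
    exact Nat.zero_le _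

end XorPairs

theorem stmt_10_general (n q k : ℕ) (hk2 : k ≤ 2 ^ n) :
    ((Finset.univ.filter
        (fun p : {f : Fin q → BitVec n // Function.Injective f} ×
                 {f : Fin q → BitVec n // Function.Injective f} =>
          k < Finset.univ.sup (fun a : BitVec n =>
            (Finset.univ.filter
              (fun ij : Fin q × Fin q => p.1.1 ij.1 ^^^ p.2.1 ij.2 = a)).card))).card
        : ℝ) /
      (Fintype.card ({f : Fin q → BitVec n // Function.Injective f} ×
                     {f : Fin q → BitVec n // Function.Injective f}))
    ≤ (q : ℝ) ^ (2 * k) * 2 ^ n * (Nat.factorial (2 ^ n - k)) /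
        (Nat.factorial k * Nat.factorial (2 ^ n)) := by
  have h := card_lt_maxXorPairs_mul_le (ι := Fin q) hk2
  rw [Fintype.card_fin] at h
  rw [Fintype.card_prod, Fintype.card_subtype_injective, BitVec.card, Fintype.card_fin]
  refine div_le_of_le_mul₀ (by positivity) (by positivity) ?_
  rw [div_mul_eq_mul_div, le_div_iff₀ (by positivity)]
  exact_mod_cast h

/-- Lemma 2 of the paper: for two independent uniformly random injective
`q`-element sequences `L1, L2` of `n`-bit strings, the maximum over
`a ∈ {0,1}^n` of the number of pairs `(h1, h2) ∈ L1 × L2` with `h1 ⊕ h2 = a`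
exceeds `k` with probability at most `q^{2k}·2^n·(2^n-k)!/(k!·(2^n)!)`.
Probability is modelled as counting over the uniform distribution on pairs of
injective sequences. -/
theorem stmt_10 (n q k : ℕ) (hn : 0 < n) (hq : 0 < q) (hk : 0 < k)
    (hk2 : k ≤ 2 ^ n) (hq2 : q ≤ 2 ^ n) :
    ((Finset.univ.filter
        (fun p : {f : Fin q → BitVec n // Function.Injective f} ×
                 {f : Fin q → BitVec n // Function.Injective f} =>
          k < Finset.univ.sup (fun a : BitVec n =>
            (Finset.univ.filter
              (fun ij : Fin q × Fin q => p.1.1 ij.1 ^^^ p.2.1 ij.2 = a)).card))).card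
        : ℝ) /
      (Fintype.card ({f : Fin q → BitVec n // Function.Injective f} ×
                     {f : Fin q → BitVec n // Function.Injective f}))
    ≤ (q : ℝ) ^ (2 * k) * 2 ^ n * (Nat.factorial (2 ^ n - k)) /
        (Nat.factorial k * Nat.factorial (2 ^ n)) :=
  stmt_10_general n q k hk2
end

section
/- In the ABR mode tree of height ℓ modeled with ideal compression functions, any collision between two distinct messages implies a proper internal collision: there exists a node (j,b) and two distinct input pairs (u,v) ≠ (u',v') queried to f_{(j,b)}, together with feed-forward values h, h' in the yield set of the right child, such that f_{(j,b)}(u,v) ⊕ h = f_{(j,b)}(u',v') ⊕ h'. -/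
/-!
Call a node *different* if the two messages differ in some block of its subtree. Descending from
the (different) root, as long as the two computations query a node on the same input pair,
equality of the feed-forward outputs forces the right chaining values to agree, hence the
message blocks and the left chaining values too. So the node's own block agrees and one of its
children is again a different node whose chaining values collide. At a leaf this contradicts the
absence of leaf collisions, so the descent stops at a node queried on distinct input pairs.
-/

/-- The chaining value computed at node `(j, b)` of the ABR tree of height
`ℓ`, with compression-function family `f`, leaf message blocks `Mleaf`
(block `i` for `i ∈ {1,…,2^ℓ}`) and internal-node message blocks `Mint`.
Level `1` holds the leaves; an internal node `(j, b)` with `j ≥ 2` computes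
`f (j,b) (m ⊕ y_left) (m ⊕ y_right) ⊕ y_right`. -/
def abrNode {n : ℕ} (f : ℕ × ℕ → BitVec n → BitVec n → BitVec n)
    (Mleaf : ℕ → BitVec n) (Mint : ℕ × ℕ → BitVec n) : ℕ → ℕ → BitVec n
  | 0, _ => 0
  | 1, b => f (1, b) (Mleaf (2 * b - 1)) (Mleaf (2 * b))
  | (j + 2), b =>
      f (j + 2, b)
        (Mint (j + 2, b) ^^^ abrNode f Mleaf Mint (j + 1) (2 * b - 1))
        (Mint (j + 2, b) ^^^ abrNode f Mleaf Mint (j + 1) (2 * b)) ^^^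
        abrNode f Mleaf Mint (j + 1) (2 * b)

theorem eq_of_xor_inputs_eq_of_feedforward_eq {α : Type*} [XorOp α] [Zero α] [LawfulXor α]
    (g : α → α → α) {m yL yR m' yL' yR' : α}
    (hin : (m ^^^ yL, m ^^^ yR) = (m' ^^^ yL', m' ^^^ yR'))
    (hout : g (m ^^^ yL) (m ^^^ yR) ^^^ yR = g (m' ^^^ yL') (m' ^^^ yR') ^^^ yR') :
    m = m' ∧ yL = yL' ∧ yR = yR' := by
  simp only [Prod.mk.injEq] at hin
  obtain ⟨hL, hR⟩ := hin
  rw [hL, hR] at hout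
  obtain rfl : yR = yR' := (xor_right_involutive _).injective hout
  obtain rfl : m = m' := (xor_left_involutive _).injective hR
  exact ⟨rfl, (xor_right_involutive _).injective hL, rfl⟩

theorem two_mul_le_two_pow_sub_of_le {ℓ j b : ℕ} (hj : j + 2 ≤ ℓ) (hb : b ≤ 2 ^ (ℓ - (j + 2))) :
    2 * b ≤ 2 ^ (ℓ - (j + 1)) := by
  rw [show ℓ - (j + 1) = ℓ - (j + 2) + 1 by omega, pow_succ]
  omega

namespace ABR

variable {n : ℕ} (f : ℕ × ℕ → BitVec n → BitVec n → BitVec n)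
  (Mleaf Mleaf' : ℕ → BitVec n) (Mint Mint' : ℕ × ℕ → BitVec n)

def DiffersBelow : ℕ → ℕ → Prop
  | 0, _ => False
  | 1, b => Mleaf (2 * b - 1) ≠ Mleaf' (2 * b - 1) ∨ Mleaf (2 * b) ≠ Mleaf' (2 * b)
  | (j + 2), b => Mint (j + 2, b) ≠ Mint' (j + 2, b) ∨
      DiffersBelow (j + 1) (2 * b - 1) ∨ DiffersBelow (j + 1) (2 * b)

def IsProperCollisionAt (j b : ℕ) : Prop :=
  (Mint (j, b) ^^^ abrNode f Mleaf Mint (j - 1) (2 * b - 1),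
      Mint (j, b) ^^^ abrNode f Mleaf Mint (j - 1) (2 * b)) ≠
    (Mint' (j, b) ^^^ abrNode f Mleaf' Mint' (j - 1) (2 * b - 1),
      Mint' (j, b) ^^^ abrNode f Mleaf' Mint' (j - 1) (2 * b)) ∧
  f (j, b) (Mint (j, b) ^^^ abrNode f Mleaf Mint (j - 1) (2 * b - 1))
      (Mint (j, b) ^^^ abrNode f Mleaf Mint (j - 1) (2 * b)) ^^^
    abrNode f Mleaf Mint (j - 1) (2 * b) =
  f (j, b) (Mint' (j, b) ^^^ abrNode f Mleaf' Mint' (j - 1) (2 * b - 1))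
      (Mint' (j, b) ^^^ abrNode f Mleaf' Mint' (j - 1) (2 * b)) ^^^
    abrNode f Mleaf' Mint' (j - 1) (2 * b)

variable {Mleaf Mleaf' Mint Mint'}

/-- The parent of node `(j, b)` is `(j + 1, (b - 1) / 2 + 1)`. -/
theorem DiffersBelow.parent {j b : ℕ} (hj : 1 ≤ j) (hb : 1 ≤ b)
    (h : DiffersBelow Mleaf Mleaf' Mint Mint' j b) :
    DiffersBelow Mleaf Mleaf' Mint Mint' (j + 1) ((b - 1) / 2 + 1) := by
  obtain ⟨j, rfl⟩ := Nat.exists_eq_add_of_le' hj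
  rcases (by omega : b = 2 * ((b - 1) / 2 + 1) - 1 ∨ b = 2 * ((b - 1) / 2 + 1)) with hb' | hb'
  · exact Or.inr (Or.inl (hb' ▸ h))
  · exact Or.inr (Or.inr (hb' ▸ h))

theorem DiffersBelow.ancestor {j b : ℕ} (hj : 1 ≤ j) (hb : 1 ≤ b)
    (h : DiffersBelow Mleaf Mleaf' Mint Mint' j b) (k : ℕ) :
    DiffersBelow Mleaf Mleaf' Mint Mint' (j + k) ((b - 1) / 2 ^ k + 1) := by
  induction k with
  | zero => simpa [Nat.sub_add_cancel hb] using h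
  | succ k ih =>
    have := ih.parent (by omega) (Nat.le_add_left 1 _)
    rwa [Nat.add_sub_cancel, Nat.div_div_eq_div_mul, ← pow_succ] at this

theorem DiffersBelow.root {ℓ j b : ℕ} (hj : 1 ≤ j) (hjℓ : j ≤ ℓ) (hb : 1 ≤ b)
    (hbℓ : b ≤ 2 ^ (ℓ - j)) (h : DiffersBelow Mleaf Mleaf' Mint Mint' j b) :
    DiffersBelow Mleaf Mleaf' Mint Mint' ℓ 1 := by
  have := h.ancestor hj hb (ℓ - j)
  rwa [Nat.add_sub_cancel' hjℓ, Nat.div_eq_of_lt (by omega), zero_add] at this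

theorem differsBelow_root_of_leaf {ℓ i : ℕ} (hℓ : 1 ≤ ℓ) (hi : 1 ≤ i) (hiℓ : i ≤ 2 ^ ℓ)
    (h : Mleaf i ≠ Mleaf' i) : DiffersBelow Mleaf Mleaf' Mint Mint' ℓ 1 := by
  have hpow : 2 ^ ℓ = 2 * 2 ^ (ℓ - 1) := by
    rw [← pow_succ', Nat.sub_add_cancel hℓ]
  refine DiffersBelow.root (j := 1) (b := (i - 1) / 2 + 1) le_rfl hℓ (by omega) (by omega) ?_
  rcases (by omega : i = 2 * ((i - 1) / 2 + 1) - 1 ∨ i = 2 * ((i - 1) / 2 + 1)) with hi' | hi'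
  · exact Or.inl (hi' ▸ h)
  · exact Or.inr (hi' ▸ h)

theorem exists_properCollisionAt_of_differsBelow {ℓ : ℕ}
    (hleaf : ∀ b, 1 ≤ b → b ≤ 2 ^ (ℓ - 1) →
      f (1, b) (Mleaf (2 * b - 1)) (Mleaf (2 * b)) =
        f (1, b) (Mleaf' (2 * b - 1)) (Mleaf' (2 * b)) →
      Mleaf (2 * b - 1) = Mleaf' (2 * b - 1) ∧ Mleaf (2 * b) = Mleaf' (2 * b))
    {j b : ℕ} (hj : 1 ≤ j) (hjℓ : j ≤ ℓ) (hb : 1 ≤ b) (hbℓ : b ≤ 2 ^ (ℓ - j))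
    (hdiff : DiffersBelow Mleaf Mleaf' Mint Mint' j b)
    (hcoll : abrNode f Mleaf Mint j b = abrNode f Mleaf' Mint' j b) :
    ∃ j b, 2 ≤ j ∧ j ≤ ℓ ∧ 1 ≤ b ∧ b ≤ 2 ^ (ℓ - j) ∧
      IsProperCollisionAt f Mleaf Mleaf' Mint Mint' j b := by
  induction j generalizing b with
  | zero => omega
  | succ j ih =>
    rcases j with _ | j
    · obtain ⟨hL, hR⟩ := hleaf b hb hbℓ hcoll
      exact (hdiff.elim (· hL) (· hR)).elim
    · by_cases hproper : IsProperCollisionAt f Mleaf Mleaf' Mint Mint' (j + 2) b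
      · exact ⟨j + 2, b, by omega, hjℓ, hb, hbℓ, hproper⟩
      have hinputs : (_, _) = (_, _) := not_not.mp fun hne => hproper ⟨hne, hcoll⟩
      obtain ⟨hm, hyL, hyR⟩ := eq_of_xor_inputs_eq_of_feedforward_eq _ hinputs hcoll
      have hchild := two_mul_le_two_pow_sub_of_le hjℓ hbℓ
      rcases hdiff with hm' | hdiffL | hdiffR
      · exact (hm' hm).elim
      · exact ih (by omega) (by omega) (by omega) (by omega) hdiffL hyL
      · exact ih (by omega) (by omega) (by omega) hchild hdiffR hyR

end ABR

open ABR in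
/-- Lemma 3 of the paper: a collision in the ABR mode implies a proper
internal collision.  If two messages agree nowhere... precisely: if the two
messages differ in some block used by the tree, produce the same root hash,
and there is no collision at the leaf level, then there is a node `(j, b)`
with `2 ≤ j ≤ ℓ` at which the two computations query the compression function
`f (j,b)` on distinct input pairs `(u, v) ≠ (u', v')` while the outputs,
feed-forwarded with the respective right-child chaining values `h, h'`,
collide: `f (j,b) u v ⊕ h = f (j,b) u' v' ⊕ h'`. -/
theorem stmt_15 {n : ℕ} (ℓ : ℕ) (hℓ : 2 ≤ ℓ)
    (f : ℕ × ℕ → BitVec n → BitVec n → BitVec n)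
    (Mleaf Mleaf' : ℕ → BitVec n) (Mint Mint' : ℕ × ℕ → BitVec n)
    -- the two messages are distinct (they differ in a block used by the tree)
    (hdist :
      (∃ i, 1 ≤ i ∧ i ≤ 2 ^ ℓ ∧ Mleaf i ≠ Mleaf' i) ∨
      (∃ j b, 2 ≤ j ∧ j ≤ ℓ ∧ 1 ≤ b ∧ b ≤ 2 ^ (ℓ - j) ∧
        Mint (j, b) ≠ Mint' (j, b)))
    -- no collision at the leaf level
    (hleaf : ∀ b, 1 ≤ b → b ≤ 2 ^ (ℓ - 1) →
      f (1, b) (Mleaf (2 * b - 1)) (Mleaf (2 * b)) =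
        f (1, b) (Mleaf' (2 * b - 1)) (Mleaf' (2 * b)) →
      Mleaf (2 * b - 1) = Mleaf' (2 * b - 1) ∧ Mleaf (2 * b) = Mleaf' (2 * b))
    -- collision at the root
    (hcoll : abrNode f Mleaf Mint ℓ 1 = abrNode f Mleaf' Mint' ℓ 1) :
    ∃ j b, 2 ≤ j ∧ j ≤ ℓ ∧ 1 ≤ b ∧ b ≤ 2 ^ (ℓ - j) ∧
      (Mint (j, b) ^^^ abrNode f Mleaf Mint (j - 1) (2 * b - 1),
        Mint (j, b) ^^^ abrNode f Mleaf Mint (j - 1) (2 * b)) ≠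
      (Mint' (j, b) ^^^ abrNode f Mleaf' Mint' (j - 1) (2 * b - 1),
        Mint' (j, b) ^^^ abrNode f Mleaf' Mint' (j - 1) (2 * b)) ∧
      f (j, b) (Mint (j, b) ^^^ abrNode f Mleaf Mint (j - 1) (2 * b - 1))
          (Mint (j, b) ^^^ abrNode f Mleaf Mint (j - 1) (2 * b)) ^^^
        abrNode f Mleaf Mint (j - 1) (2 * b) =
      f (j, b) (Mint' (j, b) ^^^ abrNode f Mleaf' Mint' (j - 1) (2 * b - 1))
          (Mint' (j, b) ^^^ abrNode f Mleaf' Mint' (j - 1) (2 * b)) ^^^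
        abrNode f Mleaf' Mint' (j - 1) (2 * b) := by
  have hroot : DiffersBelow Mleaf Mleaf' Mint Mint' ℓ 1 := by
    rcases hdist with ⟨i, hi, hiℓ, hne⟩ | ⟨j, b, hj, hjℓ, hb, hbℓ, hne⟩
    · exact differsBelow_root_of_leaf (by omega) hi hiℓ hne
    · obtain ⟨j, rfl⟩ := Nat.exists_eq_add_of_le' hj
      exact DiffersBelow.root (by omega) hjℓ hb hbℓ (Or.inl hne)
  exact exists_properCollisionAt_of_differsBelow f hleaf (by omega) le_rfl le_rfl
    (by simp) hroot hcoll
end
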